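/- arXiv:1506.08994 — 4 statements merged into one kernel-verified Lean document; each statement's English description precedes it below -/
import Mathlib

section
/- Let P be a finite nonempty set of nonzero polynomials in k[x_1,…,x_n] and let A be an ascending set contained in the ideal ⟨P⟩. Then A is a Ritt characteristic set of ⟨P⟩ if and only if prem(F, A) = 0 for every polynomial F ∈ ⟨P⟩. -/
open MvPolynomial

namespace CharSets

variable {n : ℕ} {K : Type*} [Field K]

/-- The coefficient of `x_i ^ d` in `F`, as a polynomial in the remaining variables. -/
noncomputable def coefv (i : Fin n) (d : ℕ) (F : MvPolynomial (Fin n) K) :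
    MvPolynomial (Fin n) K :=
  ∑ m ∈ F.support.filter (fun m => m i = d), monomial (Finsupp.erase i m) (F.coeff m)

/-- The leading coefficient of `F` with respect to the variable `x_i`. -/
noncomputable def lcv (i : Fin n) (F : MvPolynomial (Fin n) K) : MvPolynomial (Fin n) K :=
  coefv i (F.degreeOf i) F

/-- Auxiliary pseudo-division: computes (pseudo-quotient, pseudo-remainder) pairs,
with the first argument as fuel; the total power of the leading coefficient used is
exactly the fuel, so that starting with fuel `max(l - m + 1, 0)` yields the pair
`(Q, R)` of the unique representation `lc(F,x_i)^q • G = Q*F + R` with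
`q = max(l - m + 1, 0)` and `deg(R, x_i) < deg(F, x_i)`. -/
noncomputable def pdivAux (i : Fin n) (F : MvPolynomial (Fin n) K) :
    ℕ → MvPolynomial (Fin n) K × MvPolynomial (Fin n) K →
      MvPolynomial (Fin n) K × MvPolynomial (Fin n) K
  | 0, QR => QR
  | q + 1, QR =>
    if (QR.2).degreeOf i < F.degreeOf i then
      (lcv i F ^ (q + 1) * QR.1, lcv i F ^ (q + 1) * QR.2)
    else
      pdivAux i F q
        (lcv i F * QR.1 +
            coefv i ((QR.2).degreeOf i) QR.2 * X i ^ ((QR.2).degreeOf i - F.degreeOf i),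
          lcv i F * QR.2 -
            coefv i ((QR.2).degreeOf i) QR.2 * X i ^ ((QR.2).degreeOf i - F.degreeOf i) * F)

/-- The pseudo-remainder `prem(G, F, x_i)`. -/
noncomputable def prem (G F : MvPolynomial (Fin n) K) (i : Fin n) : MvPolynomial (Fin n) K :=
  (pdivAux i F (G.degreeOf i + 1 - F.degreeOf i) (0, G)).2

/-- The pseudo-quotient `pquo(G, F, x_i)`. -/
noncomputable def pquo (G F : MvPolynomial (Fin n) K) (i : Fin n) : MvPolynomial (Fin n) K :=
  (pdivAux i F (G.degreeOf i + 1 - F.degreeOf i) (0, G)).1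

/-- The class of `P`: the largest index (1-based) of a variable actually occurring in `P`;
the class of a constant is `0`. -/
noncomputable def cls (P : MvPolynomial (Fin n) K) : ℕ :=
  P.vars.sup fun i => (i : ℕ) + 1

/-- The degree of `G` in the leading variable of `P` (`0` if `P` is constant). -/
noncomputable def degLv (G P : MvPolynomial (Fin n) K) : ℕ :=
  if h : P.vars.Nonempty then G.degreeOf (P.vars.max' h) else 0

/-- `G` is R-reduced with respect to `P`, i.e. `deg(G, lv(P)) < deg(P, lv(P))`. -/
def RReduced (G P : MvPolynomial (Fin n) K) : Prop :=
  degLv G P < degLv P P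

/-- The initial of `P`: its leading coefficient w.r.t. its leading variable. -/
noncomputable def ini (P : MvPolynomial (Fin n) K) : MvPolynomial (Fin n) K :=
  if h : P.vars.Nonempty then lcv (P.vars.max' h) P else P

/-- Pseudo-remainder of `G` w.r.t. `F` in the leading variable of `F`
(in case `F` is constant, `m = 0` and the pseudo-remainder is `0`). -/
noncomputable def premLv (G F : MvPolynomial (Fin n) K) : MvPolynomial (Fin n) K :=
  if h : F.vars.Nonempty then prem G F (F.vars.max' h) else 0

/-- Pseudo-quotient of `G` w.r.t. `F` in the leading variable of `F`. -/
noncomputable def pquoLv (G F : MvPolynomial (Fin n) K) : MvPolynomial (Fin n) K :=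
  if h : F.vars.Nonempty then pquo G F (F.vars.max' h) else 0

/-- Iterated pseudo-remainder with respect to a triangular set `[T_1, …, T_r]`:
`prem(P, T) = prem(⋯prem(P, T_r, lv(T_r)), …, T_1, lv(T_1))`. -/
noncomputable def premTS (P : MvPolynomial (Fin n) K) (L : List (MvPolynomial (Fin n) K)) :
    MvPolynomial (Fin n) K :=
  L.foldr (fun T acc => premLv acc T) P

/-- The Sylvester matrix of `F` and `G` with respect to the variable `x_i`. -/
noncomputable def sylvester (i : Fin n) (F G : MvPolynomial (Fin n) K) :
    Matrix (Fin (G.degreeOf i + F.degreeOf i)) (Fin (G.degreeOf i + F.degreeOf i))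
      (MvPolynomial (Fin n) K) :=
  Matrix.of fun r c =>
    if (r : ℕ) < G.degreeOf i then
      if (r : ℕ) ≤ (c : ℕ) ∧ (c : ℕ) ≤ (r : ℕ) + F.degreeOf i then
        coefv i (F.degreeOf i + (r : ℕ) - (c : ℕ)) F
      else 0
    else
      if (r : ℕ) - G.degreeOf i ≤ (c : ℕ) ∧ (c : ℕ) ≤ (r : ℕ) then
        coefv i (G.degreeOf i + ((r : ℕ) - G.degreeOf i) - (c : ℕ)) G
      else 0

/-- The resultant `res(F, G, x_i)` of `F` and `G` w.r.t. `x_i`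
(the determinant of the Sylvester matrix). -/
noncomputable def resv (F G : MvPolynomial (Fin n) K) (i : Fin n) : MvPolynomial (Fin n) K :=
  (sylvester i F G).det

/-- Resultant of `F` and `G` w.r.t. the leading variable of `G`. -/
noncomputable def resLv (F G : MvPolynomial (Fin n) K) : MvPolynomial (Fin n) K :=
  if h : G.vars.Nonempty then resv F G (G.vars.max' h) else F

/-- Iterated resultant with respect to a triangular set:
`res(F, T) = res(⋯res(F, T_r, lv(T_r)), …, T_1, lv(T_1))`. -/
noncomputable def resTS (F : MvPolynomial (Fin n) K) (L : List (MvPolynomial (Fin n) K)) :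
    MvPolynomial (Fin n) K :=
  L.foldr (fun T acc => resLv acc T) F

/-- A triangular set: a nonempty ordered set of nonconstant polynomials with
strictly increasing classes. -/
def TriangularSet (L : List (MvPolynomial (Fin n) K)) : Prop :=
  L ≠ [] ∧ (∀ T ∈ L, 0 < cls T) ∧ L.Chain' fun A B => cls A < cls B

/-- An ascending set: either a single nonzero constant, or a triangular set in which
every later element is R-reduced with respect to every earlier one. -/
def AscendingSet (L : List (MvPolynomial (Fin n) K)) : Prop :=
  (∃ a : K, a ≠ 0 ∧ L = [MvPolynomial.C a]) ∨
    (TriangularSet L ∧ L.Pairwise fun A B => RReduced B A)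

/-- `F` has lower rank than `G`. -/
def rkLT (F G : MvPolynomial (Fin n) K) : Prop :=
  cls F < cls G ∨ (cls F = cls G ∧ 0 < cls F ∧ degLv F F < degLv G G)

/-- `F` and `G` have the same rank: neither has lower rank than the other. -/
def rkEQ (F G : MvPolynomial (Fin n) K) : Prop :=
  ¬ rkLT F G ∧ ¬ rkLT G F

/-- `B` has lower rank than `A` (as ascending sets). -/
def ascLT (B A : List (MvPolynomial (Fin n) K)) : Prop :=
  (∃ j, j < min A.length B.length ∧
      (∀ i, i < j → rkEQ (A.getD i 0) (B.getD i 0)) ∧ rkLT (B.getD j 0) (A.getD j 0)) ∨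
    (A.length < B.length ∧ ∀ i, i < A.length → rkEQ (A.getD i 0) (B.getD i 0))

/-- A Ritt characteristic set of the ideal `I`: an ascending set contained in `I`
of minimal rank among all ascending sets contained in `I`. -/
def RittCharSet (I : Ideal (MvPolynomial (Fin n) K)) (A : List (MvPolynomial (Fin n) K)) :
    Prop :=
  AscendingSet A ∧ (∀ a ∈ A, a ∈ I) ∧
    ∀ B : List (MvPolynomial (Fin n) K), AscendingSet B → (∀ b ∈ B, b ∈ I) → ¬ ascLT B A

/-- The saturated ideal of a triangular set, as a set of polynomials. -/
def satTS (L : List (MvPolynomial (Fin n) K)) : Set (MvPolynomial (Fin n) K) :=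
  {F | ∃ q : ℕ, 0 < q ∧ (L.map ini).prod ^ q * F ∈ Ideal.span {T | T ∈ L}}

/-- A regular set: a triangular set such that `res(ini(T_j), [T_1, …, T_{j-1}]) ≠ 0`
for `j = 2, …, r`. -/
def RegularSet (L : List (MvPolynomial (Fin n) K)) : Prop :=
  TriangularSet L ∧
    ∀ j : ℕ, 0 < j → j < L.length → resTS (ini (L.getD j 0)) (L.take j) ≠ 0

/-- A normal triangular set: `deg(ini(T_j), lv(T_i)) = 0` for all `i < j`. -/
def NormalSet (L : List (MvPolynomial (Fin n) K)) : Prop :=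
  TriangularSet L ∧ L.Pairwise fun A B => degLv (ini B) A = 0

/-- The purely lexicographical order on monomials determined by `x_1 < ⋯ < x_n`. -/
def plexLT (a b : Fin n →₀ ℕ) : Prop :=
  ∃ k : Fin n, a k < b k ∧ ∀ j : Fin n, k < j → a j = b j

/-- `m` is the leading monomial of `P` w.r.t. the plex order. -/
def IsLpp (P : MvPolynomial (Fin n) K) (m : Fin n →₀ ℕ) : Prop :=
  m ∈ P.support ∧ ∀ m' ∈ P.support, m' ≠ m → plexLT m' m

/-- `G` is the reduced (Buchberger–)Gröbner basis of the ideal `I` w.r.t. the plex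
term order determined by `x_1 < ⋯ < x_n`: its elements are nonzero monic members of `I`,
the leading monomial of every nonzero member of `I` is divisible by the leading monomial
of some element of `G`, every element of `G` is B-reduced w.r.t. the others, and `G`
generates `I`. -/
def IsReducedGB (I : Ideal (MvPolynomial (Fin n) K)) (G : Finset (MvPolynomial (Fin n) K)) :
    Prop :=
  (∀ g ∈ G, g ∈ I ∧ g ≠ 0 ∧ ∀ m, IsLpp g m → g.coeff m = 1) ∧
    (∀ F ∈ I, F ≠ 0 → ∃ g ∈ G, ∃ mg mF, IsLpp g mg ∧ IsLpp F mF ∧ mg ≤ mF) ∧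
    (∀ g ∈ G, ∀ g' ∈ G, g' ≠ g → ∀ m ∈ g.support, ∀ m', IsLpp g' m' → ¬ m' ≤ m) ∧
    Ideal.span (G : Set (MvPolynomial (Fin n) K)) = I

/-- `Cs` is the W-characteristic set of `I`: the minimal triangular set contained in the
reduced plex Gröbner basis `G` of `I`, i.e. for each class realized in `G`, `Cs` contains
the element of that class whose leading monomial is minimal w.r.t. the plex order, the
elements being ordered by increasing class (equivalently, by the plex order). -/
def IsWCharSet (I : Ideal (MvPolynomial (Fin n) K)) (Cs : List (MvPolynomial (Fin n) K)) :
    Prop :=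
  ∃ G : Finset (MvPolynomial (Fin n) K), IsReducedGB I G ∧
    (Cs.Chain' fun A B => cls A < cls B) ∧
    (∀ c ∈ Cs, c ∈ G) ∧
    (∀ g ∈ G, ∃ c ∈ Cs, cls c = cls g) ∧
    ∀ c ∈ Cs, ∀ g ∈ G, cls g = cls c → g ≠ c →
      ∃ mc mg, IsLpp c mc ∧ IsLpp g mg ∧ plexLT mc mg

/-- The set of common zeros of a set `S` of polynomials over `k`, taken in `Kc ^ n`
for an extension `Kc` of `k`. -/
def zeroSet {k : Type*} [Field k] (Kc : Type*) [CommRing Kc] [Algebra k Kc]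
    (S : Set (MvPolynomial (Fin n) k)) : Set (Fin n → Kc) :=
  {a | ∀ p ∈ S, MvPolynomial.aeval a p = 0}

/-!
Pseudo-division of `F` by an ascending set `A` produces `prem(F, A)`, which lies in every ideal
containing `F` and `A` and is R-reduced with respect to every element of `A`. If it is nonzero,
putting it right after the elements of `A` of lower class (and dropping the others) gives an
ascending set in the ideal of lower rank than `A`, so `A` is not a characteristic set.
Conversely, if `B ≺ A` is an ascending set in the ideal, the element of `B` at the first
position where the ranks of `A` and `B` differ (or the first one past the end of `A`) is
R-reduced with respect to all of `A`; it is therefore its own pseudo-remainder and is nonzero.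
-/

theorem _root_.Polynomial.degree_C_leadingCoeff_mul_sub_lt {R : Type*} [CommRing R]
    [IsDomain R] {f g : Polynomial R} (hf : f ≠ 0) (hg : g ≠ 0)
    (hfg : f.natDegree ≤ g.natDegree) :
    (Polynomial.C f.leadingCoeff * g -
        Polynomial.C g.leadingCoeff * Polynomial.X ^ (g.natDegree - f.natDegree) * f).degree <
      g.degree := by
  have hlf : f.leadingCoeff ≠ 0 := Polynomial.leadingCoeff_ne_zero.mpr hf
  have hlg : g.leadingCoeff ≠ 0 := Polynomial.leadingCoeff_ne_zero.mpr hg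
  have hdeg : (Polynomial.C f.leadingCoeff * g).degree = g.degree := Polynomial.degree_C_mul hlf
  rw [← hdeg]
  refine Polynomial.degree_sub_lt_left ?_ (mul_ne_zero (Polynomial.C_ne_zero.mpr hlf) hg) ?_
  · rw [hdeg, mul_assoc, Polynomial.degree_C_mul hlg, Polynomial.degree_mul,
      Polynomial.degree_X_pow, Polynomial.degree_eq_natDegree hf,
      Polynomial.degree_eq_natDegree hg, ← Nat.cast_add, Nat.sub_add_cancel hfg]
  · simp only [Polynomial.leadingCoeff_mul, Polynomial.leadingCoeff_C,
      Polynomial.leadingCoeff_X_pow]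
    ring

theorem _root_.MvPolynomial.degreeOf_eq_zero_iff_notMem_vars {σ R : Type*} [CommSemiring R]
    {v : σ} {F : MvPolynomial σ R} : degreeOf v F = 0 ↔ v ∉ F.vars := by
  classical
  simp [degreeOf_def, vars_def, Multiset.count_eq_zero]

theorem _root_.MvPolynomial.degreeOf_pos_iff_mem_vars {σ R : Type*} [CommSemiring R]
    {v : σ} {F : MvPolynomial σ R} : 0 < degreeOf v F ↔ v ∈ F.vars := by
  rw [Nat.pos_iff_ne_zero, Ne, degreeOf_eq_zero_iff_notMem_vars, not_not]

theorem _root_.MvPolynomial.degreeOf_mul_le_of_degreeOf_eq_zero {σ R : Type*} [CommSemiring R]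
    {v : σ} {a : MvPolynomial σ R} (ha : degreeOf v a = 0) (b : MvPolynomial σ R) :
    degreeOf v (a * b) ≤ degreeOf v b := by
  simpa [ha] using degreeOf_mul_le v a b

theorem _root_.MvPolynomial.degreeOf_pow_eq_zero {σ R : Type*} [CommSemiring R]
    {v : σ} {a : MvPolynomial σ R} (ha : degreeOf v a = 0) (k : ℕ) :
    degreeOf v (a ^ k) = 0 := by
  simpa [ha] using degreeOf_pow_le v a k

section OneVariable

variable (i : Fin n)

theorem degreeOf_coefv_le (v : Fin n) (d : ℕ) (F : MvPolynomial (Fin n) K) :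
    degreeOf v (coefv i d F) ≤ degreeOf v F := by
  refine (degreeOf_sum_le _ _ _).trans (Finset.sup_le fun m hm => ?_)
  rw [Finset.mem_filter] at hm
  rw [degreeOf_monomial_eq _ _ (mem_support_iff.mp hm.1), Finsupp.erase_apply]
  split_ifs
  · exact Nat.zero_le _
  · exact monomial_le_degreeOf v hm.1

theorem degreeOf_coefv_self (d : ℕ) (F : MvPolynomial (Fin n) K) :
    degreeOf i (coefv i d F) = 0 := by
  refine Nat.le_zero.mp ((degreeOf_sum_le _ _ _).trans (Finset.sup_le fun m hm => ?_))
  rw [Finset.mem_filter, mem_support_iff] at hm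
  rw [degreeOf_monomial_eq _ _ hm.1, Finsupp.erase_same]

theorem coefv_eq_zero_of_degreeOf_lt {d : ℕ} {F : MvPolynomial (Fin n) K}
    (h : degreeOf i F < d) : coefv i d F = 0 :=
  Finset.sum_eq_zero fun m hm => by
    rw [Finset.mem_filter] at hm
    exact absurd (monomial_le_degreeOf i hm.1) (by omega)

/-- `F` as a polynomial in `x_i` whose coefficients, though free of `x_i`, are kept in
`K[x_1, …, x_n]`, so that `lcv i F` is literally its leading coefficient. -/
noncomputable def toPoly : MvPolynomial (Fin n) K →+* Polynomial (MvPolynomial (Fin n) K) :=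
  eval₂Hom (Polynomial.C.comp C) fun j => if j = i then Polynomial.X else Polynomial.C (X j)

theorem toPoly_monomial (m : Fin n →₀ ℕ) (c : K) :
    toPoly i (monomial m c) = Polynomial.C (monomial (m.erase i) c) * Polynomial.X ^ m i := by
  classical
  have hrest : ((m.erase i).prod fun j e =>
      (if j = i then Polynomial.X else Polynomial.C (X j : MvPolynomial (Fin n) K)) ^ e) =
      Polynomial.C ((m.erase i).prod fun j e => X j ^ e) := by
    rw [Finsupp.prod, Finsupp.prod, map_prod]
    refine Finset.prod_congr rfl fun j hj => ?_
    rw [if_neg (fun h => by simp [h] at hj), map_pow]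
  rw [toPoly, coe_eval₂Hom, eval₂_monomial, ← Finsupp.mul_prod_erase' m i _ (by simp), hrest,
    monomial_eq, if_pos rfl, RingHom.comp_apply, map_mul]
  ring

@[simp] theorem toPoly_X_self : toPoly i (X i : MvPolynomial (Fin n) K) = Polynomial.X := by
  simp [toPoly]

theorem coeff_toPoly (F : MvPolynomial (Fin n) K) (d : ℕ) :
    (toPoly i F).coeff d = coefv i d F := by
  classical
  conv_lhs => rw [F.as_sum]
  simp only [map_sum, toPoly_monomial, Polynomial.finsetSum_coeff, Polynomial.coeff_C_mul_X_pow,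
    coefv, Finset.sum_filter]
  exact Finset.sum_congr rfl fun m _ => by split_ifs <;> simp_all [eq_comm]

theorem eval_X_toPoly (F : MvPolynomial (Fin n) K) : (toPoly i F).eval (X i) = F := by
  change (Polynomial.evalRingHom (X i)).comp (toPoly i) F = RingHom.id _ F
  congr 1
  refine ringHom_ext (fun c => ?_) fun j => ?_
  · simp [toPoly]
  · by_cases hj : j = i
    · subst hj; simp [toPoly]
    · simp [toPoly, hj]

theorem toPoly_injective : Function.Injective (toPoly i : MvPolynomial (Fin n) K → _) :=
  Function.LeftInverse.injective (eval_X_toPoly i)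

theorem natDegree_toPoly (F : MvPolynomial (Fin n) K) :
    (toPoly i F).natDegree = degreeOf i F := by
  refine le_antisymm (Polynomial.natDegree_le_iff_coeff_eq_zero.mpr fun d hd => ?_) ?_
  · rw [coeff_toPoly]
    exact coefv_eq_zero_of_degreeOf_lt i (by exact_mod_cast hd)
  · conv_lhs => rw [← eval_X_toPoly i F, Polynomial.eval_eq_sum_range]
    refine (degreeOf_sum_le _ _ _).trans (Finset.sup_le fun k hk => ?_)
    refine (degreeOf_mul_le _ _ _).trans ?_
    rw [coeff_toPoly, degreeOf_coefv_self, zero_add, degreeOf_X_self_pow]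
    exact Nat.lt_succ_iff.mp (Finset.mem_range.mp hk)

theorem leadingCoeff_toPoly (F : MvPolynomial (Fin n) K) :
    (toPoly i F).leadingCoeff = lcv i F := by
  rw [Polynomial.leadingCoeff, natDegree_toPoly, coeff_toPoly, lcv]

theorem toPoly_eq_C_of_degreeOf_eq_zero {F : MvPolynomial (Fin n) K} (h : degreeOf i F = 0) :
    toPoly i F = Polynomial.C F := by
  have hC := Polynomial.eq_C_of_natDegree_eq_zero (p := toPoly i F) (by rwa [natDegree_toPoly])
  conv_rhs => rw [← eval_X_toPoly i F, hC, Polynomial.eval_C]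
  exact hC

theorem toPoly_lcv (F : MvPolynomial (Fin n) K) : toPoly i (lcv i F) = Polynomial.C (lcv i F) :=
  toPoly_eq_C_of_degreeOf_eq_zero i (degreeOf_coefv_self i _ F)

theorem degreeOf_lcv_mul_sub_lt {F R : MvPolynomial (Fin n) K} (hF : 0 < degreeOf i F)
    (hFR : degreeOf i F ≤ degreeOf i R) :
    degreeOf i (lcv i F * R - lcv i R * X i ^ (degreeOf i R - degreeOf i F) * F) <
      degreeOf i R := by
  have hinj {p : MvPolynomial (Fin n) K} (hp : p ≠ 0) : toPoly i p ≠ 0 :=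
    (map_ne_zero_iff _ (toPoly_injective i)).mpr hp
  have hF0 : F ≠ 0 := by rintro rfl; simp at hF
  have hR0 : R ≠ 0 := by rintro rfl; rw [degreeOf_zero] at hFR; omega
  have hstep := Polynomial.degree_C_leadingCoeff_mul_sub_lt (hinj hF0) (hinj hR0)
    (by rwa [natDegree_toPoly, natDegree_toPoly])
  rw [leadingCoeff_toPoly, leadingCoeff_toPoly, natDegree_toPoly, natDegree_toPoly,
    ← toPoly_lcv, ← toPoly_lcv, ← toPoly_X_self, ← map_pow,
    ← map_mul, ← map_mul, ← map_mul, ← map_sub] at hstep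
  set S := lcv i F * R - lcv i R * X i ^ (degreeOf i R - degreeOf i F) * F
  rcases eq_or_ne S 0 with h0 | h0
  · rw [h0, degreeOf_zero]; omega
  · have := Polynomial.natDegree_lt_natDegree (hinj h0) hstep
    rwa [natDegree_toPoly, natDegree_toPoly] at this

end OneVariable

section PseudoDivision

variable (i : Fin n)

theorem pdivAux_spec (F : MvPolynomial (Fin n) K) (q : ℕ)
    (QR : MvPolynomial (Fin n) K × MvPolynomial (Fin n) K) :
    (pdivAux i F q QR).1 * F + (pdivAux i F q QR).2 = lcv i F ^ q * (QR.1 * F + QR.2) := by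
  induction q generalizing QR with
  | zero => simp [pdivAux]
  | succ q ih =>
    rw [pdivAux]
    split
    · ring
    · rw [ih]
      ring

theorem degreeOf_pdivAux_snd_lt {F : MvPolynomial (Fin n) K} (hF : 0 < degreeOf i F) (q : ℕ)
    (QR : MvPolynomial (Fin n) K × MvPolynomial (Fin n) K)
    (hq : degreeOf i QR.2 < degreeOf i F + q) :
    degreeOf i (pdivAux i F q QR).2 < degreeOf i F := by
  induction q generalizing QR with
  | zero => simpa [pdivAux] using hq
  | succ q ih =>
    rw [pdivAux]
    split
    next hred =>
      exact (degreeOf_mul_le_of_degreeOf_eq_zero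
        (degreeOf_pow_eq_zero (degreeOf_coefv_self i _ F) _) _).trans_lt hred
    next hred =>
      refine ih _ ?_
      have := degreeOf_lcv_mul_sub_lt i hF (not_lt.mp hred)
      dsimp only [lcv] at this ⊢
      omega

theorem degreeOf_pdivAux_snd_le {v : Fin n} (hv : v ≠ i) {F : MvPolynomial (Fin n) K}
    (hF : degreeOf v F = 0) (q : ℕ) (QR : MvPolynomial (Fin n) K × MvPolynomial (Fin n) K) :
    degreeOf v (pdivAux i F q QR).2 ≤ degreeOf v QR.2 := by
  have hlcv : degreeOf v (lcv i F) = 0 := Nat.le_zero.mp (hF ▸ degreeOf_coefv_le i v _ F)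
  have hXF (e : ℕ) : degreeOf v (X i ^ e * F) = 0 :=
    Nat.le_zero.mp (hF ▸ degreeOf_mul_le_of_degreeOf_eq_zero (degreeOf_X_pow_of_ne _ hv) F)
  induction q generalizing QR with
  | zero => simp [pdivAux]
  | succ q ih =>
    rw [pdivAux]
    split
    · exact degreeOf_mul_le_of_degreeOf_eq_zero (degreeOf_pow_eq_zero hlcv _) _
    · refine (ih _).trans ((degreeOf_sub_le _ _ _).trans (max_le
        (degreeOf_mul_le_of_degreeOf_eq_zero hlcv _) ?_))
      rw [mul_assoc]
      refine (degreeOf_mul_le _ _ _).trans ?_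
      rw [hXF, add_zero]
      exact degreeOf_coefv_le i v _ _

theorem lcv_pow_mul_eq_pquo_mul_add_prem (G F : MvPolynomial (Fin n) K) :
    lcv i F ^ (degreeOf i G + 1 - degreeOf i F) * G = pquo G F i * F + prem G F i := by
  have h := pdivAux_spec i F (degreeOf i G + 1 - degreeOf i F) (0, G)
  rw [zero_mul, zero_add] at h
  exact h.symm

theorem degreeOf_prem_lt (G : MvPolynomial (Fin n) K) {F : MvPolynomial (Fin n) K}
    (hF : 0 < degreeOf i F) : degreeOf i (prem G F i) < degreeOf i F :=
  degreeOf_pdivAux_snd_lt i hF _ _ (by dsimp only; omega)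

theorem degreeOf_prem_le (G : MvPolynomial (Fin n) K) {F : MvPolynomial (Fin n) K} {v : Fin n}
    (hv : v ≠ i) (hF : degreeOf v F = 0) : degreeOf v (prem G F i) ≤ degreeOf v G :=
  degreeOf_pdivAux_snd_le i hv hF _ _

theorem prem_eq_self {G F : MvPolynomial (Fin n) K} (h : degreeOf i G < degreeOf i F) :
    prem G F i = G := by
  rw [prem, Nat.sub_eq_zero_of_le h, pdivAux]

end PseudoDivision

section Rank

variable {F G P R T W : MvPolynomial (Fin n) K}

theorem cls_eq_max'_add_one (h : P.vars.Nonempty) : cls P = (P.vars.max' h : ℕ) + 1 :=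
  le_antisymm (Finset.sup_le fun v hv => by simpa using Finset.le_max' _ v hv)
    (Finset.le_sup (f := fun v : Fin n => (v : ℕ) + 1) (P.vars.max'_mem h))

theorem cls_pos_iff : 0 < cls P ↔ P.vars.Nonempty := by
  refine ⟨fun h => Finset.nonempty_iff_ne_empty.mpr fun he => ?_, fun h => ?_⟩
  · simp [cls, he] at h
  · rw [cls_eq_max'_add_one h]; omega

theorem max'_notMem_vars_of_cls_lt (h : cls F < cls G) (hG : G.vars.Nonempty) :
    G.vars.max' hG ∉ F.vars := fun hmem => by
  have : (G.vars.max' hG : ℕ) + 1 ≤ cls F :=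
    Finset.le_sup (f := fun v : Fin n => (v : ℕ) + 1) hmem
  rw [cls_eq_max'_add_one hG] at h
  omega

theorem degLv_eq_of_cls_eq (h : cls F = cls G) (W : MvPolynomial (Fin n) K) :
    degLv W F = degLv W G := by
  by_cases hF : F.vars.Nonempty
  · have hG : G.vars.Nonempty := cls_pos_iff.mp (h ▸ cls_pos_iff.mpr hF)
    rw [cls_eq_max'_add_one hF, cls_eq_max'_add_one hG] at h
    have hlv : F.vars.max' hF = G.vars.max' hG := Fin.ext (by omega)
    rw [degLv, degLv, dif_pos hF, dif_pos hG, hlv]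
  · have hG : ¬ G.vars.Nonempty := fun hG => hF (cls_pos_iff.mp (h ▸ cls_pos_iff.mpr hG))
    rw [degLv, degLv, dif_neg hF, dif_neg hG]

theorem degLv_self_pos (h : P.vars.Nonempty) : 0 < degLv P P := by
  rw [degLv, dif_pos h]
  exact degreeOf_pos_iff_mem_vars.mpr (P.vars.max'_mem h)

theorem RReduced.vars_nonempty (h : RReduced G P) : P.vars.Nonempty := by
  by_contra hP
  simp [RReduced, degLv, hP] at h

theorem RReduced.cls_pos (h : RReduced G P) : 0 < cls P :=
  cls_pos_iff.mpr h.vars_nonempty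

theorem rReduced_of_cls_lt (h : cls F < cls G) : RReduced F G := by
  have hG : G.vars.Nonempty := cls_pos_iff.mp (by omega)
  have hF0 : degLv F G = 0 := by
    rw [degLv, dif_pos hG]
    exact degreeOf_eq_zero_iff_notMem_vars.mpr (max'_notMem_vars_of_cls_lt h hG)
  rw [RReduced, hF0]
  exact degLv_self_pos hG

theorem rReduced_of_rkLT (h : rkLT F G) : RReduced F G := by
  rcases h with h | ⟨hcls, -, hdeg⟩
  · exact rReduced_of_cls_lt h
  · rwa [RReduced, ← degLv_eq_of_cls_eq hcls]

theorem rkLT.cls_le (h : rkLT F G) : cls F ≤ cls G := by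
  rcases h with h | ⟨h, -⟩ <;> omega

theorem rkEQ_refl (F : MvPolynomial (Fin n) K) : rkEQ F F := by
  constructor <;> · rw [rkLT]; omega

theorem rkEQ.cls_eq (h : rkEQ F G) : cls F = cls G := by
  obtain ⟨h1, h2⟩ := h
  simp only [rkLT, not_or] at h1 h2
  omega

theorem RReduced.of_rkEQ (h : rkEQ F G) (hW : RReduced W G) : RReduced W F := by
  have hcls := h.cls_eq
  have hdeg : ¬ degLv F F < degLv G G ∧ ¬ degLv G G < degLv F F := by
    have := hW.cls_pos
    simpa [rkEQ, rkLT, hcls, this] using h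
  rw [RReduced, degLv_eq_of_cls_eq hcls]
  unfold RReduced at hW
  omega

theorem cls_lt_of_rReduced_of_not_rkLT (hR : RReduced R T) (hn : ¬ rkLT R T) : cls T < cls R := by
  have := hR.cls_pos
  rcases lt_trichotomy (cls R) (cls T) with h | h | h
  · exact absurd (Or.inl h) hn
  · unfold RReduced at hR
    rw [← degLv_eq_of_cls_eq h] at hR
    exact absurd (Or.inr ⟨h, by omega, hR⟩) hn
  · exact h

end Rank

section IteratedPseudoRemainder

variable {F G T : MvPolynomial (Fin n) K}

theorem premLv_mem {I : Ideal (MvPolynomial (Fin n) K)} (hG : G ∈ I) (hF : F ∈ I) :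
    premLv G F ∈ I := by
  unfold premLv
  split
  · rw [eq_sub_of_add_eq' (lcv_pow_mul_eq_pquo_mul_add_prem _ G F).symm]
    exact I.sub_mem (I.mul_mem_left _ hG) (I.mul_mem_left _ hF)
  · exact I.zero_mem

theorem rReduced_premLv (G : MvPolynomial (Fin n) K) (hF : F.vars.Nonempty) :
    RReduced (premLv G F) F := by
  rw [RReduced, degLv, degLv, premLv, dif_pos hF, dif_pos hF, dif_pos hF]
  exact degreeOf_prem_lt _ G (degreeOf_pos_iff_mem_vars.mpr (F.vars.max'_mem hF))

theorem degLv_premLv_le (G : MvPolynomial (Fin n) K) (h : cls F < cls T) :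
    degLv (premLv G F) T ≤ degLv G T := by
  have hT : T.vars.Nonempty := cls_pos_iff.mp (by omega)
  have hnot := max'_notMem_vars_of_cls_lt h hT
  rw [degLv, degLv, dif_pos hT, dif_pos hT, premLv]
  split
  · exact degreeOf_prem_le _ G (fun he => hnot (he ▸ F.vars.max'_mem _))
      (degreeOf_eq_zero_iff_notMem_vars.mpr hnot)
  · exact Nat.zero_le _

theorem premLv_eq_self (h : RReduced G F) : premLv G F = G := by
  have hF := h.vars_nonempty
  rw [RReduced, degLv, degLv, dif_pos hF, dif_pos hF] at h
  rw [premLv, dif_pos hF, prem_eq_self _ h]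

@[simp] theorem premTS_cons (F T : MvPolynomial (Fin n) K) (L : List (MvPolynomial (Fin n) K)) :
    premTS F (T :: L) = premLv (premTS F L) T := rfl

theorem premTS_mem {I : Ideal (MvPolynomial (Fin n) K)} {L : List (MvPolynomial (Fin n) K)}
    (hF : F ∈ I) (hL : ∀ T ∈ L, T ∈ I) : premTS F L ∈ I := by
  induction L with
  | nil => exact hF
  | cons T L ih =>
    simp only [List.forall_mem_cons] at hL
    exact premLv_mem (ih hL.2) hL.1

theorem rReduced_premTS (F : MvPolynomial (Fin n) K) {L : List (MvPolynomial (Fin n) K)}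
    (hL : ∀ T ∈ L, 0 < cls T) (hcls : L.Pairwise fun A B => cls A < cls B) :
    ∀ T ∈ L, RReduced (premTS F L) T := by
  induction L with
  | nil => simp
  | cons A L ih =>
    simp only [List.forall_mem_cons, List.pairwise_cons] at hL hcls ⊢
    refine ⟨rReduced_premLv _ (cls_pos_iff.mp hL.1), fun T hT => ?_⟩
    exact (degLv_premLv_le _ (hcls.1 T hT)).trans_lt (ih hL.2 hcls.2 T hT)

theorem premTS_eq_self {L : List (MvPolynomial (Fin n) K)} (h : ∀ T ∈ L, RReduced G T) :
    premTS G L = G := by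
  induction L with
  | nil => rfl
  | cons A L ih =>
    simp only [List.forall_mem_cons] at h
    rw [premTS_cons, ih h.2, premLv_eq_self h.1]

end IteratedPseudoRemainder

section AscendingSets

variable {A B : List (MvPolynomial (Fin n) K)}

theorem AscendingSet.pairwise_cls_lt (h : AscendingSet A) :
    A.Pairwise fun X Y => cls X < cls Y := by
  rcases h with ⟨a, -, rfl⟩ | ⟨⟨-, -, hchain⟩, -⟩
  · exact List.pairwise_singleton _ _
  · exact List.isChain_iff_pairwise.mp hchain

theorem AscendingSet.pairwise_rReduced (h : AscendingSet A) :
    A.Pairwise fun X Y => RReduced Y X := by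
  rcases h with ⟨a, -, rfl⟩ | ⟨-, hred⟩
  · exact List.pairwise_singleton _ _
  · exact hred

theorem AscendingSet.ne_zero (h : AscendingSet A) : ∀ T ∈ A, T ≠ 0 := by
  rcases h with ⟨a, ha, rfl⟩ | ⟨⟨-, hcls, -⟩, -⟩
  · simpa using ha
  · rintro T hT rfl
    simpa [cls] using hcls 0 hT

theorem ascendingSet_singleton {R : MvPolynomial (Fin n) K} (hR : R ≠ 0) : AscendingSet [R] := by
  by_cases hc : R.vars.Nonempty
  · exact Or.inr ⟨⟨List.cons_ne_nil _ _, by simpa using cls_pos_iff.mpr hc,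
      List.isChain_singleton _⟩, List.pairwise_singleton _ _⟩
  · have hRC := vars_eq_empty_iff_eq_C.mp (Finset.not_nonempty_iff_eq_empty.mp hc)
    exact Or.inl ⟨R.coeff 0, fun h0 => hR (by rw [hRC, h0, map_zero]), by rw [← hRC]⟩

theorem premTS_singleton_C (F : MvPolynomial (Fin n) K) (a : K) : premTS F [C a] = 0 := by
  simp [premLv, vars_C]

theorem _root_.List.getD_take_append_singleton {α : Type*} {l : List α} {j : ℕ}
    (hj : j ≤ l.length) (x d : α) (i : ℕ) :
    (l.take j ++ [x]).getD i d = if i < j then l.getD i d else if i = j then x else d := by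
  rw [List.getD_eq_getElem?_getD, List.getD_eq_getElem?_getD, List.getElem?_append,
    List.length_take_of_le hj]
  split_ifs with h1 h2
  · rw [List.getElem?_take_of_lt h1]
  · simp [h2]
  · rw [List.getElem?_singleton, if_neg (by omega)]
    rfl

theorem AscendingSet.take_append_singleton {R : MvPolynomial (Fin n) K} (hA : AscendingSet A)
    (hR0 : R ≠ 0) (hR : ∀ T ∈ A, RReduced R T) {j : ℕ}
    (hj : ∀ T ∈ A.take j, cls T < cls R) :
    AscendingSet (A.take j ++ [R]) := by
  by_cases hc : cls R = 0
  · have : A.take j = [] := List.eq_nil_iff_forall_not_mem.mpr fun T hT => by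
      have := hj T hT; omega
    rw [this]
    exact ascendingSet_singleton hR0
  refine Or.inr ⟨⟨by simp, fun T hT => ?_, List.isChain_iff_pairwise.mpr ?_⟩, ?_⟩
  · rcases List.mem_append.mp hT with hT | hT
    · exact (hR T (List.mem_of_mem_take hT)).cls_pos
    · rw [List.mem_singleton.mp hT]; omega
  · exact List.pairwise_append.mpr ⟨hA.pairwise_cls_lt.sublist (List.take_sublist _ _),
      List.pairwise_singleton _ _, fun x hx y hy => List.mem_singleton.mp hy ▸ hj x hx⟩
  · exact List.pairwise_append.mpr ⟨hA.pairwise_rReduced.sublist (List.take_sublist _ _),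
      List.pairwise_singleton _ _,
      fun x hx y hy => List.mem_singleton.mp hy ▸ hR x (List.mem_of_mem_take hx)⟩

theorem exists_ascLT_of_rReduced {R : MvPolynomial (Fin n) K} (hA : AscendingSet A) (hR0 : R ≠ 0)
    (hR : ∀ T ∈ A, RReduced R T) :
    ∃ B, AscendingSet B ∧ (∀ b ∈ B, b ∈ A ∨ b = R) ∧ ascLT B A := by
  classical
  set j := A.findIdx fun T => decide (rkLT R T)
  have hjA : j ≤ A.length := List.findIdx_le_length
  have hbefore : ∀ T ∈ A.take j, cls T < cls R := by
    intro T hT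
    obtain ⟨k, hk, rfl⟩ := List.mem_take_iff_getElem.mp hT
    exact cls_lt_of_rReduced_of_not_rkLT (hR _ (List.getElem_mem _))
      (by simpa using List.not_of_lt_findIdx (lt_min_iff.mp hk).1)
  have hlen : (A.take j ++ [R]).length = j + 1 := by simp [hjA]
  have hgetD := List.getD_take_append_singleton hjA R 0
  refine ⟨A.take j ++ [R], hA.take_append_singleton hR0 hR hbefore, fun b hb => ?_, ?_⟩
  · rcases List.mem_append.mp hb with hb | hb
    · exact Or.inl (List.mem_of_mem_take hb)
    · exact Or.inr (List.mem_singleton.mp hb)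
  rcases hjA.lt_or_eq with hj | hj
  · refine Or.inl ⟨j, by omega, fun i hi => by rw [hgetD, if_pos hi]; exact rkEQ_refl _, ?_⟩
    rw [hgetD, if_neg (lt_irrefl j), if_pos rfl, List.getD_eq_getElem _ _ hj]
    simpa using List.findIdx_getElem (w := hj)
  · refine Or.inr ⟨by omega, fun i hi => ?_⟩
    rw [hgetD, if_pos (hj ▸ hi)]
    exact rkEQ_refl _

theorem exists_rReduced_of_ascLT (hA : A.Pairwise fun X Y => cls X < cls Y)
    (hB : B.Pairwise fun X Y => RReduced Y X) (hlt : ascLT B A) :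
    ∃ W ∈ B, ∀ T ∈ A, RReduced W T := by
  obtain ⟨j, hjB, hEQ, hLT⟩ : ∃ j < B.length, (∀ i < j, rkEQ (A.getD i 0) (B.getD i 0)) ∧
      (j < A.length → rkLT (B.getD j 0) (A.getD j 0)) := by
    rcases hlt with ⟨j, hj, hEQ, hLT⟩ | ⟨hlen, hEQ⟩
    · exact ⟨j, (lt_min_iff.mp hj).2, hEQ, fun _ => hLT⟩
    · exact ⟨A.length, hlen, hEQ, fun h => absurd h (lt_irrefl _)⟩
  refine ⟨B.getD j 0, List.getD_eq_getElem _ 0 hjB ▸ List.getElem_mem hjB, fun T hT => ?_⟩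
  obtain ⟨k, hk, rfl⟩ := List.getElem_of_mem hT
  rw [← List.getD_eq_getElem _ 0 hk]
  rcases lt_trichotomy k j with hkj | rfl | hjk
  · refine RReduced.of_rkEQ (hEQ k hkj) ?_
    rw [List.getD_eq_getElem _ _ hjB, List.getD_eq_getElem _ _ (hkj.trans hjB)]
    exact List.pairwise_iff_getElem.mp hB k j _ hjB hkj
  · exact rReduced_of_rkLT (hLT hk)
  · refine rReduced_of_cls_lt ((hLT (hjk.trans hk)).cls_le.trans_lt ?_)
    rw [List.getD_eq_getElem _ _ (hjk.trans hk), List.getD_eq_getElem _ _ hk]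
    exact List.pairwise_iff_getElem.mp hA j k _ hk hjk

theorem exists_ascLT_of_premTS_ne_zero {F : MvPolynomial (Fin n) K} (hA : AscendingSet A)
    (hF : premTS F A ≠ 0) :
    ∃ B, AscendingSet B ∧ (∀ b ∈ B, b ∈ A ∨ b = premTS F A) ∧ ascLT B A := by
  rcases id hA with ⟨a, -, rfl⟩ | ⟨⟨-, hcls, -⟩, -⟩
  · exact absurd (premTS_singleton_C F a) hF
  · exact exists_ascLT_of_rReduced hA hF (rReduced_premTS F hcls hA.pairwise_cls_lt)

theorem rittCharSet_iff_premTS_eq_zero (I : Ideal (MvPolynomial (Fin n) K)) (hA : AscendingSet A)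
    (hAI : ∀ a ∈ A, a ∈ I) : RittCharSet I A ↔ ∀ F ∈ I, premTS F A = 0 := by
  refine ⟨fun ⟨_, _, hmin⟩ F hF => ?_, fun hprem => ⟨hA, hAI, fun B hB hBI hlt => ?_⟩⟩
  · by_contra hR
    obtain ⟨B, hB, hBA, hlt⟩ := exists_ascLT_of_premTS_ne_zero hA hR
    refine hmin B hB (fun b hb => ?_) hlt
    rcases hBA b hb with hb | rfl
    · exact hAI b hb
    · exact premTS_mem hF hAI
  · obtain ⟨W, hWB, hW⟩ := exists_rReduced_of_ascLT hA.pairwise_cls_lt hB.pairwise_rReduced hlt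
    exact hB.ne_zero W hWB (premTS_eq_self hW ▸ hprem W (hBI W hWB))

end AscendingSets

theorem statement0_general {n : ℕ} {K : Type*} [Field K]
    (P : Finset (MvPolynomial (Fin n) K))
    (A : List (MvPolynomial (Fin n) K)) (hA : AscendingSet A)
    (hAI : ∀ a ∈ A, a ∈ Ideal.span (P : Set (MvPolynomial (Fin n) K))) :
    RittCharSet (Ideal.span (P : Set (MvPolynomial (Fin n) K))) A ↔
      ∀ F ∈ Ideal.span (P : Set (MvPolynomial (Fin n) K)), premTS F A = 0 :=
  rittCharSet_iff_premTS_eq_zero _ hA hAI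

/-- Lemma on Ritt characteristic sets. Let `P` be a finite nonempty set of
nonzero polynomials and `A` an ascending set contained in `⟨P⟩`. Then `A` is a Ritt
characteristic set of `⟨P⟩` iff `prem(F, A) = 0` for all `F ∈ ⟨P⟩`. -/
theorem statement0 {n : ℕ} {K : Type*} [Field K]
    (P : Finset (MvPolynomial (Fin n) K)) (hne : P.Nonempty) (h0 : ∀ p ∈ P, p ≠ 0)
    (A : List (MvPolynomial (Fin n) K)) (hA : AscendingSet A)
    (hAI : ∀ a ∈ A, a ∈ Ideal.span (P : Set (MvPolynomial (Fin n) K))) :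
    RittCharSet (Ideal.span (P : Set (MvPolynomial (Fin n) K))) A ↔
      ∀ F ∈ Ideal.span (P : Set (MvPolynomial (Fin n) K)), premTS F A = 0 :=
  statement0_general P A hA hAI

end CharSets
end

section
/- For any polynomial F and any triangular set T = [T_1,…,T_r] in k[x_1,…,x_n], there exist polynomials A, B_1,…,B_r ∈ k[x_1,…,x_n] such that res(F, T) = A·F + B_1·T_1 + ⋯ + B_r·T_r; in particular, the iterated resultant res(F, T) lies in the ideal ⟨F, T_1,…,T_r⟩. -/
/-!
Multiplying the `N × N` Sylvester matrix `M` of `F` and `G` with respect to `x_i` by the column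
`(x_i ^ (N - 1), …, x_i, 1)` gives the column of the polynomials `x_i ^ k * F` and
`x_i ^ k * G`. Since `adj M * M = det M • 1`, the last entry shows that the resultant is a
combination of these, so `res(F, G, x_i) ∈ ⟨F, G⟩`. Iterating along the triangular set gives
`res(F, T) ∈ ⟨F, T_1, …, T_r⟩`, and writing out a member of this ideal gives the cofactors.
-/

open MvPolynomial

namespace CharSets

variable {n : ℕ} {K : Type*} [Field K]

lemma sum_coefv_mul_X_pow (i : Fin n) (F : MvPolynomial (Fin n) K) :
    ∑ d ∈ Finset.range (F.degreeOf i + 1), coefv i d F * X i ^ d = F := by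
  have hdeg : ∀ m ∈ F.support, m i ∈ Finset.range (F.degreeOf i + 1) := fun m hm =>
    Finset.mem_range_succ_iff.mpr (monomial_le_degreeOf i hm)
  calc ∑ d ∈ Finset.range (F.degreeOf i + 1), coefv i d F * X i ^ d
      = ∑ d ∈ Finset.range (F.degreeOf i + 1),
          ∑ m ∈ F.support.filter (fun m => m i = d), monomial m (F.coeff m) := by
        refine Finset.sum_congr rfl fun d _ => ?_
        rw [coefv, Finset.sum_mul]
        refine Finset.sum_congr rfl fun m hm => ?_
        rw [X_pow_eq_monomial, monomial_mul, mul_one, ← (Finset.mem_filter.mp hm).2,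
          Finsupp.erase_add_single]
    _ = ∑ m ∈ F.support, monomial m (F.coeff m) := Finset.sum_fiberwise_of_maps_to hdeg _
    _ = F := support_sum_monomial_coeff F

/-- A row of a Sylvester matrix, holding the coefficients of `P` from column `a` on,
applied to the column `(X i ^ (N - 1 - c))_c`. -/
lemma sum_band_mul_X_pow (i : Fin n) (P : MvPolynomial (Fin n) K) {N a : ℕ}
    (ha : a + P.degreeOf i < N) :
    ∑ c ∈ Finset.range N,
        (if a ≤ c ∧ c ≤ a + P.degreeOf i then coefv i (P.degreeOf i + a - c) P else 0) *
          X i ^ (N - 1 - c) =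
      X i ^ (N - 1 - a - P.degreeOf i) * P := by
  set d := P.degreeOf i
  conv_rhs => rw [← sum_coefv_mul_X_pow i P, Finset.mul_sum]
  simp only [ite_mul, zero_mul]
  rw [← Finset.sum_filter]
  refine Finset.sum_nbij' (fun c => d + a - c) (fun e => d + a - e) ?_ ?_ ?_ ?_ fun c hc => ?_
  any_goals simp only [Finset.mem_filter, Finset.mem_range]; omega
  · simp only [Finset.mem_filter, Finset.mem_range] at hc
    rw [mul_comm (X i ^ _), mul_assoc, ← pow_add]
    congr 2
    omega

lemma sylvester_mulVec_X_pow (i : Fin n) (F G : MvPolynomial (Fin n) K)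
    (r : Fin (G.degreeOf i + F.degreeOf i)) :
    (sylvester i F G).mulVec (fun c => X i ^ (G.degreeOf i + F.degreeOf i - 1 - c)) r =
      if (r : ℕ) < G.degreeOf i then X i ^ (G.degreeOf i - 1 - r) * F
      else X i ^ (G.degreeOf i + F.degreeOf i - 1 - r) * G := by
  have hr := r.isLt
  rw [Matrix.mulVec, dotProduct]
  split_ifs with hrG
  · rw [show G.degreeOf i - 1 - r = G.degreeOf i + F.degreeOf i - 1 - r - F.degreeOf i by omega,
      ← sum_band_mul_X_pow i F (by omega), ← Fin.sum_univ_eq_sum_range]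
    simp only [sylvester, Matrix.of_apply, if_pos hrG]
  · rw [show G.degreeOf i + F.degreeOf i - 1 - r =
        G.degreeOf i + F.degreeOf i - 1 - (r - G.degreeOf i) - G.degreeOf i by omega,
      ← sum_band_mul_X_pow i G (a := r - G.degreeOf i) (by omega), ← Fin.sum_univ_eq_sum_range]
    simp only [sylvester, Matrix.of_apply, if_neg hrG, Nat.sub_add_cancel (not_lt.mp hrG)]

lemma _root_.MvPolynomial.degreeOf_pos_of_mem_vars {σ R : Type*} [CommSemiring R]
    {p : MvPolynomial σ R} {i : σ} (hi : i ∈ p.vars) : 0 < p.degreeOf i := by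
  obtain ⟨m, hm, him⟩ := (mem_vars_iff_mem_support i).mp hi
  exact (Nat.pos_of_ne_zero (Finsupp.mem_support_iff.mp him)).trans_le
    (monomial_le_degreeOf i hm)

/-- The `j`-th entry of `det M • v = adj M *ᵥ (M *ᵥ v)` is `det M`. -/
lemma _root_.Matrix.det_mem_of_mulVec_mem {R ι : Type*} [CommRing R] [Fintype ι]
    [DecidableEq ι] {M : Matrix ι ι R} {v : ι → R} {j : ι} (hj : v j = 1) {I : Ideal R}
    (hMv : ∀ r, M.mulVec v r ∈ I) : M.det ∈ I := by
  have hcramer : M.det • v = M.adjugate.mulVec (M.mulVec v) := by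
    rw [Matrix.mulVec_mulVec, Matrix.adjugate_mul, Matrix.smul_mulVec, Matrix.one_mulVec]
  have hdet := congrFun hcramer j
  rw [Pi.smul_apply, hj, smul_eq_mul, mul_one] at hdet
  rw [hdet]
  exact Ideal.sum_mem _ fun c _ => Ideal.mul_mem_left _ _ (hMv c)

lemma resv_mem_span (F G : MvPolynomial (Fin n) K) (i : Fin n)
    (hdeg : 0 < G.degreeOf i + F.degreeOf i) :
    resv F G i ∈ Ideal.span {F, G} := by
  refine Matrix.det_mem_of_mulVec_mem (M := sylvester i F G)
    (v := fun c => X i ^ (G.degreeOf i + F.degreeOf i - 1 - c))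
    (j := ⟨_, Nat.sub_one_lt_of_lt hdeg⟩) ?_ fun r => ?_
  · simp
  · rw [sylvester_mulVec_X_pow]
    split_ifs
    · exact Ideal.mul_mem_left _ _ (Ideal.subset_span (Set.mem_insert _ _))
    · exact Ideal.mul_mem_left _ _ (Ideal.subset_span (Set.mem_insert_of_mem _ rfl))

lemma resLv_mem_span (F G : MvPolynomial (Fin n) K) :
    resLv F G ∈ Ideal.span {F, G} := by
  unfold resLv
  split_ifs with h
  · exact resv_mem_span F G _ (Nat.add_pos_left (degreeOf_pos_of_mem_vars (G.vars.max'_mem h)) _)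
  · exact Ideal.subset_span (Set.mem_insert _ _)

lemma resTS_mem_span (F : MvPolynomial (Fin n) K) (L : List (MvPolynomial (Fin n) K)) :
    resTS F L ∈ Ideal.span ({F} ∪ {T | T ∈ L}) := by
  induction L with
  | nil => exact Ideal.subset_span (Or.inl rfl)
  | cons T L ih =>
    refine Ideal.span_le.mpr ?_ (resLv_mem_span (resTS F L) T)
    rintro x (rfl | rfl)
    · exact Ideal.span_mono
        (Set.union_subset_union_right _ fun _ hy => List.mem_cons_of_mem _ hy) ih
    · exact Ideal.subset_span (Or.inr List.mem_cons_self)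

lemma _root_.List.exists_sum_mul_getD_of_mem_span {R : Type*} [CommSemiring R] {L : List R}
    {x : R} (hx : x ∈ Ideal.span {T | T ∈ L}) :
    ∃ B : ℕ → R, x = ∑ i ∈ Finset.range L.length, B i * L.getD i 0 := by
  rw [← Set.range_list_get, Ideal.mem_span_range_iff_exists_fun] at hx
  obtain ⟨c, rfl⟩ := hx
  refine ⟨fun i => if h : i < L.length then c ⟨i, h⟩ else 0, ?_⟩
  rw [Finset.sum_range]
  refine Finset.sum_congr rfl fun i _ => ?_
  simp

theorem statement5_general {n : ℕ} {K : Type*} [Field K]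
    (F : MvPolynomial (Fin n) K) (L : List (MvPolynomial (Fin n) K)) :
    (∃ A : MvPolynomial (Fin n) K, ∃ B : ℕ → MvPolynomial (Fin n) K,
        resTS F L = A * F + ∑ i ∈ Finset.range L.length, B i * L.getD i 0) ∧
      resTS F L ∈ Ideal.span ({F} ∪ {T | T ∈ L} : Set (MvPolynomial (Fin n) K)) := by
  have hmem := resTS_mem_span F L
  refine ⟨?_, hmem⟩
  rw [Ideal.span_union, Submodule.mem_sup] at hmem
  obtain ⟨y, hy, z, hz, hyz⟩ := hmem
  obtain ⟨A, rfl⟩ := Ideal.mem_span_singleton'.mp hy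
  obtain ⟨B, rfl⟩ := List.exists_sum_mul_getD_of_mem_span hz
  exact ⟨A, B, hyz.symm⟩

/-- For any polynomial `F` and triangular set `T = [T_1, …, T_r]`, there
are polynomials `A, B_1, …, B_r` with `res(F, T) = A·F + B_1·T_1 + ⋯ + B_r·T_r`; in
particular `res(F, T) ∈ ⟨F, T_1, …, T_r⟩`. -/
theorem statement5 {n : ℕ} {K : Type*} [Field K]
    (F : MvPolynomial (Fin n) K) (L : List (MvPolynomial (Fin n) K))
    (hT : TriangularSet L) :
    (∃ A : MvPolynomial (Fin n) K, ∃ B : ℕ → MvPolynomial (Fin n) K,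
        resTS F L = A * F + ∑ i ∈ Finset.range L.length, B i * L.getD i 0) ∧
      resTS F L ∈ Ideal.span ({F} ∪ {T | T ∈ L} : Set (MvPolynomial (Fin n) K)) :=
  statement5_general F L

end CharSets
end

section
/- Let C = [C_1,…,C_r] be the W-characteristic set of ⟨P⟩ with I_i = ini(C_i) for 1 ≤ i ≤ r. Then Zero(C) \ Zero({I_1⋯I_r}) ⊆ Zero(P) ⊆ Zero(C). -/
/-!
Let `a` be a zero of `C` at which no initial vanishes, and `𝔭` the prime ideal of polynomials
vanishing at `a`. If some `f ∈ ⟨P⟩` were outside `𝔭`, pseudo-dividing it successively by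
`C_r, …, C_1` would give a member of `⟨P⟩` still outside `𝔭` (each step multiplies by an
initial, which is not in `𝔭`, and subtracts a multiple of some `C_i ∈ 𝔭`), hence nonzero, and
reduced with respect to `C`. That is impossible: the plex leading monomial of a nonzero member
of `⟨P⟩` is a multiple of that of some element `g` of the reduced Gröbner basis, and the element
of `C` of the same class as `g` has a plex-smaller leading monomial, hence no larger degree in
their common leading variable. The other inclusion holds because `C ⊆ ⟨P⟩`.
-/

open MvPolynomial

namespace CharSets

variable {n : ℕ} {K : Type*} [Field K]

section Class

variable {f : MvPolynomial (Fin n) K} {p k : Fin n}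

lemma lt_cls_of_mem_vars (h : k ∈ f.vars) : (k : ℕ) < cls f :=
  Finset.le_sup (f := fun i : Fin n => (i : ℕ) + 1) h

lemma cls_eq_zero_iff : cls f = 0 ↔ f.vars = ∅ := by
  simp [cls, Finset.eq_empty_iff_forall_notMem]

lemma exists_mem_vars_cls_eq (h : 0 < cls f) : ∃ p ∈ f.vars, cls f = p + 1 :=
  Finset.exists_mem_eq_sup _
    (Finset.nonempty_iff_ne_empty.mpr fun he => h.ne' (cls_eq_zero_iff.mpr he)) _

lemma degreeOf_eq_zero_of_cls_le (h : cls f ≤ k) : f.degreeOf k = 0 := by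
  by_contra hk
  exact (lt_cls_of_mem_vars (mem_vars_iff_degreeOf_ne_zero.mpr hk)).not_ge h

lemma apply_eq_zero_of_cls_le {m : Fin n →₀ ℕ} (hm : m ∈ f.support) (h : cls f ≤ k) :
    m k = 0 :=
  Nat.le_zero.mp (degreeOf_le_iff.mp (degreeOf_eq_zero_of_cls_le h).le m hm)

lemma mem_vars_of_cls_eq (h : cls f = p + 1) : p ∈ f.vars := by
  obtain ⟨q, hq, hqp⟩ := exists_mem_vars_cls_eq (f := f) (by omega)
  rwa [show p = q from Fin.ext (by omega)]

lemma degreeOf_pos_of_cls_eq (h : cls f = p + 1) : 0 < f.degreeOf p :=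
  Nat.pos_of_ne_zero (mem_vars_iff_degreeOf_ne_zero.mp (mem_vars_of_cls_eq h))

lemma max'_vars_eq_of_cls_eq (h : cls f = p + 1) :
    f.vars.max' ⟨p, mem_vars_of_cls_eq h⟩ = p :=
  le_antisymm (Finset.max'_le _ _ _ fun i hi => Fin.le_def.mpr (by
      have := lt_cls_of_mem_vars hi; omega))
    (Finset.le_max' _ _ (mem_vars_of_cls_eq h))

lemma ini_eq_lcv (h : cls f = p + 1) : ini f = lcv p f := by
  rw [ini, dif_pos ⟨p, mem_vars_of_cls_eq h⟩, max'_vars_eq_of_cls_eq h]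

lemma rReduced_iff {g : MvPolynomial (Fin n) K} (h : cls f = p + 1) :
    RReduced g f ↔ g.degreeOf p < f.degreeOf p := by
  have hv : f.vars.Nonempty := ⟨p, mem_vars_of_cls_eq h⟩
  simp only [RReduced, degLv, dif_pos hv, max'_vars_eq_of_cls_eq h]

end Class

section Coefv

variable {i : Fin n} {e : ℕ} {f : MvPolynomial (Fin n) K}

lemma mem_support_coefv {m : Fin n →₀ ℕ} (hm : m ∈ (coefv i e f).support) :
    ∃ m' ∈ f.support, m' i = e ∧ m = Finsupp.erase i m' := by
  classical
  obtain ⟨m', hm', hm⟩ := Finset.mem_biUnion.mp (support_sum hm)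
  obtain ⟨hm'f, hm'i⟩ := Finset.mem_filter.mp hm'
  exact ⟨m', hm'f, hm'i, Finset.mem_singleton.mp (support_monomial_subset hm)⟩

lemma degreeOf_coefv_le_s8 (q : Fin n) : (coefv i e f).degreeOf q ≤ f.degreeOf q := by
  refine degreeOf_le_iff.mpr fun m hm => ?_
  obtain ⟨m', hm', -, rfl⟩ := mem_support_coefv hm
  rw [Finsupp.erase_apply]
  split_ifs
  exacts [Nat.zero_le _, monomial_le_degreeOf q hm']

lemma degreeOf_coefv_self_s8 : (coefv i e f).degreeOf i = 0 := by
  refine Nat.le_zero.mp (degreeOf_le_iff.mpr fun m hm => ?_)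
  obtain ⟨m', -, -, rfl⟩ := mem_support_coefv hm
  simp

lemma coeff_coefv_mul_X_pow (m : Fin n →₀ ℕ) :
    coeff m (coefv i e f * X i ^ e) = if m i = e then coeff m f else 0 := by
  classical
  have : coefv i e f * X i ^ e =
      ∑ m' ∈ f.support.filter (fun m' => m' i = e), monomial m' (f.coeff m') := by
    rw [coefv, Finset.sum_mul]
    refine Finset.sum_congr rfl fun m' hm' => ?_
    rw [X_pow_eq_monomial, monomial_mul, mul_one, ← (Finset.mem_filter.mp hm').2,
      Finsupp.erase_add_single]
  rw [this, coeff_sum]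
  simp only [coeff_monomial, Finset.sum_ite_eq', Finset.mem_filter, mem_support_iff]
  split_ifs <;> tauto

end Coefv

noncomputable def premStep (i : Fin n) (c f : MvPolynomial (Fin n) K) : MvPolynomial (Fin n) K :=
  lcv i c * f - lcv i f * X i ^ (f.degreeOf i - c.degreeOf i) * c

section PremStep

variable {i : Fin n} {c f : MvPolynomial (Fin n) K}

lemma degreeOf_sub_lcv_mul_X_pow_lt (h : 0 < f.degreeOf i) :
    (f - lcv i f * X i ^ f.degreeOf i).degreeOf i < f.degreeOf i := by
  refine degreeOf_sub_lt h (fun m hm hle => ?_) (fun m hm _ => ?_)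
  · rw [lcv, coeff_coefv_mul_X_pow, if_pos (le_antisymm (monomial_le_degreeOf i hm) hle)]
  · replace hm := mem_support_iff.mp hm
    rw [lcv, coeff_coefv_mul_X_pow] at hm ⊢
    split_ifs at hm ⊢
    exacts [rfl, absurd rfl hm]

lemma degreeOf_premStep_lt (hc : 0 < c.degreeOf i) (hcf : c.degreeOf i ≤ f.degreeOf i) :
    (premStep i c f).degreeOf i < f.degreeOf i := by
  set m := c.degreeOf i
  set d := f.degreeOf i
  have hX : X (R := K) i ^ (d - m) * X i ^ m = X i ^ d := by
    rw [← pow_add, Nat.sub_add_cancel hcf]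
  have hsplit : premStep i c f = lcv i c * (f - lcv i f * X i ^ d)
      - lcv i f * X i ^ (d - m) * (c - lcv i c * X i ^ m) := by
    rw [premStep]
    linear_combination (-(lcv i c * lcv i f)) * hX
  rw [hsplit]
  refine (degreeOf_sub_le _ _ _).trans_lt (max_lt ?_ ?_)
  · calc _ ≤ (lcv i c).degreeOf i + (f - lcv i f * X i ^ d).degreeOf i := degreeOf_mul_le ..
      _ < d := by
        rw [lcv, degreeOf_coefv_self_s8, zero_add]
        exact degreeOf_sub_lcv_mul_X_pow_lt (hc.trans_le hcf)
  · calc _ ≤ (lcv i f * X i ^ (d - m)).degreeOf i + (c - lcv i c * X i ^ m).degreeOf i :=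
          degreeOf_mul_le ..
      _ ≤ (lcv i f).degreeOf i + (X i ^ (d - m)).degreeOf i
          + (c - lcv i c * X i ^ m).degreeOf i := by gcongr; exact degreeOf_mul_le ..
      _ < 0 + (d - m) + m := by
        rw [lcv, degreeOf_coefv_self_s8, degreeOf_X_self_pow]
        exact Nat.add_lt_add_left (degreeOf_sub_lcv_mul_X_pow_lt hc) _
      _ = d := by omega

lemma degreeOf_premStep_le {q : Fin n} (hq : c.degreeOf q = 0) (hqi : q ≠ i) :
    (premStep i c f).degreeOf q ≤ f.degreeOf q := by
  refine (degreeOf_sub_le _ _ _).trans (max_le ?_ ?_)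
  · have := degreeOf_mul_le q (lcv i c) f
    have : (lcv i c).degreeOf q ≤ c.degreeOf q := degreeOf_coefv_le_s8 q
    omega
  · have := degreeOf_mul_le q (lcv i f * X i ^ (f.degreeOf i - c.degreeOf i)) c
    rw [degreeOf_mul_X_pow_of_ne _ hqi] at this
    have : (lcv i f).degreeOf q ≤ f.degreeOf q := degreeOf_coefv_le_s8 q
    omega

lemma premStep_mem {I : Ideal (MvPolynomial (Fin n) K)} (hc : c ∈ I) (hf : f ∈ I) :
    premStep i c f ∈ I :=
  I.sub_mem (I.mul_mem_left _ hf) (I.mul_mem_left _ hc)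

lemma premStep_notMem {𝔭 : Ideal (MvPolynomial (Fin n) K)} [𝔭.IsPrime] (hc : c ∈ 𝔭)
    (hlc : lcv i c ∉ 𝔭) (hf : f ∉ 𝔭) : premStep i c f ∉ 𝔭 := by
  intro h
  have := 𝔭.add_mem h (𝔭.mul_mem_left (lcv i f * X i ^ (f.degreeOf i - c.degreeOf i)) hc)
  rw [premStep, sub_add_cancel] at this
  exact (Ideal.IsPrime.mem_or_mem ‹_› this).elim hlc hf

end PremStep

section Reduction

variable {I 𝔭 : Ideal (MvPolynomial (Fin n) K)} [𝔭.IsPrime]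

lemma exists_degreeOf_lt_of_prime {i : Fin n} {c f : MvPolynomial (Fin n) K}
    (hcI : c ∈ I) (hc𝔭 : c ∈ 𝔭) (hlc : lcv i c ∉ 𝔭) (hc : 0 < c.degreeOf i)
    (hfI : f ∈ I) (hf : f ∉ 𝔭) :
    ∃ g ∈ I, g ∉ 𝔭 ∧ g.degreeOf i < c.degreeOf i ∧
      ∀ q, c.degreeOf q = 0 → g.degreeOf q ≤ f.degreeOf q := by
  induction hd : f.degreeOf i using Nat.strong_induction_on generalizing f with
  | _ d ih =>
  by_cases hlt : f.degreeOf i < c.degreeOf i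
  · exact ⟨f, hfI, hf, hlt, fun _ _ => le_rfl⟩
  obtain ⟨g, hgI, hg, hgi, hgq⟩ :=
    ih _ (hd ▸ degreeOf_premStep_lt hc (not_lt.mp hlt)) (premStep_mem hcI hfI)
      (premStep_notMem hc𝔭 hlc hf) rfl
  refine ⟨g, hgI, hg, hgi, fun q hq => (hgq q hq).trans (degreeOf_premStep_le hq ?_)⟩
  rintro rfl
  omega

lemma exists_forall_rReduced_of_prime {Cs : List (MvPolynomial (Fin n) K)}
    (hCs : Cs.Pairwise fun A B => cls A < cls B) (hpos : ∀ c ∈ Cs, 0 < cls c)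
    (hI : ∀ c ∈ Cs, c ∈ I) (h𝔭 : ∀ c ∈ Cs, c ∈ 𝔭) (hini : ∀ c ∈ Cs, ini c ∉ 𝔭)
    {f : MvPolynomial (Fin n) K} (hfI : f ∈ I) (hf : f ∉ 𝔭) :
    ∃ g ∈ I, g ∉ 𝔭 ∧ ∀ c ∈ Cs, RReduced g c := by
  induction Cs with
  | nil => exact ⟨f, hfI, hf, by simp⟩
  | cons c Cs ih =>
  simp only [List.pairwise_cons, List.mem_cons, forall_eq_or_imp] at hCs hpos hI h𝔭 hini
  obtain ⟨g, hgI, hg, hred⟩ := ih hCs.2 hpos.2 hI.2 h𝔭.2 hini.2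
  obtain ⟨p, -, hp⟩ := exists_mem_vars_cls_eq hpos.1
  obtain ⟨g', hg'I, hg', hlt, hle⟩ := exists_degreeOf_lt_of_prime hI.1 h𝔭.1
    (ini_eq_lcv hp ▸ hini.1) (degreeOf_pos_of_cls_eq hp) hgI hg
  refine ⟨g', hg'I, hg', ?_⟩
  simp only [List.mem_cons, forall_eq_or_imp]
  refine ⟨(rReduced_iff hp).mpr hlt, fun c' hc' => ?_⟩
  -- the classes increase, so `c` does not involve the leading variable of `c'`
  obtain ⟨p', -, hp'⟩ := exists_mem_vars_cls_eq (hpos.2 c' hc')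
  have hcp' : c.degreeOf p' = 0 := degreeOf_eq_zero_of_cls_le (by have := hCs.1 c' hc'; omega)
  exact (rReduced_iff hp').mpr ((hle p' hcp').trans_lt ((rReduced_iff hp').mp (hred c' hc')))

end Reduction

section WCharSet

variable {I : Ideal (MvPolynomial (Fin n) K)}

lemma plexLT_asymm {a b : Fin n →₀ ℕ} (hab : plexLT a b) (hba : plexLT b a) : False := by
  obtain ⟨k, hk, hk'⟩ := hab
  obtain ⟨l, hl, hl'⟩ := hba
  rcases lt_trichotomy k l with hkl | rfl | hlk
  · have := hk' l hkl; omega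
  · omega
  · have := hl' k hlk; omega

lemma IsLpp.unique {f : MvPolynomial (Fin n) K} {m m' : Fin n →₀ ℕ}
    (h : IsLpp f m) (h' : IsLpp f m') : m = m' := by
  by_contra hne
  exact plexLT_asymm (h'.2 m h.1 hne) (h.2 m' h'.1 (Ne.symm hne))

lemma apply_le_of_plexLT {a b : Fin n →₀ ℕ} {p : Fin n} (hb : ∀ k, p < k → b k = 0)
    (h : plexLT a b) : a p ≤ b p := by
  obtain ⟨k, hk, hk'⟩ := h
  rcases lt_trichotomy k p with hkp | rfl | hpk
  · exact (hk' p hkp).le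
  · exact hk.le
  · exact absurd (hb k hpk) (by omega)

lemma IsLpp.degreeOf_le {f : MvPolynomial (Fin n) K} {m : Fin n →₀ ℕ} {p : Fin n}
    (hm : IsLpp f m) (hp : cls f = p + 1) : f.degreeOf p ≤ m p := by
  refine degreeOf_le_iff.mpr fun m' hm' => ?_
  rcases eq_or_ne m' m with rfl | hne
  · exact le_rfl
  · exact apply_le_of_plexLT (fun k hk => apply_eq_zero_of_cls_le hm.1 (by omega))
      (hm.2 m' hm' hne)

lemma IsReducedGB.cls_pos {G : Finset (MvPolynomial (Fin n) K)} (hGB : IsReducedGB I G)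
    (hI : I ≠ ⊤) {g : MvPolynomial (Fin n) K} (hg : g ∈ G) : 0 < cls g := by
  obtain ⟨hgI, hg0, -⟩ := hGB.1 g hg
  refine Nat.pos_of_ne_zero fun h => hI (Ideal.eq_top_of_isUnit_mem _ hgI ?_)
  rw [vars_eq_empty_iff_eq_C.mp (cls_eq_zero_iff.mp h)] at hg0 ⊢
  exact (Ne.isUnit fun h0 => hg0 (by rw [h0, C_0])).map C

lemma IsWCharSet.exists_not_rReduced {Cs : List (MvPolynomial (Fin n) K)}
    (hW : IsWCharSet I Cs) (hI : I ≠ ⊤) {f : MvPolynomial (Fin n) K} (hf : f ∈ I)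
    (hf0 : f ≠ 0) : ∃ c ∈ Cs, ¬ RReduced f c := by
  obtain ⟨G, hGB, -, -, hcover, hmin⟩ := hW
  obtain ⟨g, hg, mg, mf, hmg, hmf, hle⟩ := hGB.2.1 f hf hf0
  obtain ⟨c, hc, hcg⟩ := hcover g hg
  obtain ⟨p, -, hp⟩ := exists_mem_vars_cls_eq (hcg ▸ hGB.cls_pos hI hg)
  refine ⟨c, hc, fun hred => ?_⟩
  have hcmg : c.degreeOf p ≤ mg p := by
    rcases eq_or_ne g c with rfl | hne
    · exact hmg.degreeOf_le hp
    · obtain ⟨mc, mg', hmc, hmg', hlt⟩ := hmin c hc g hg hcg.symm hne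
      rw [hmg'.unique hmg] at hlt
      exact (hmc.degreeOf_le hp).trans
        (apply_le_of_plexLT (fun k hk => apply_eq_zero_of_cls_le hmg.1 (by omega)) hlt)
  have hmf' : mf p ≤ f.degreeOf p := monomial_le_degreeOf p hmf.1
  have := hle p
  have := (rReduced_iff hp).mp hred
  omega

lemma IsWCharSet.le_of_isPrime {Cs : List (MvPolynomial (Fin n) K)} (hW : IsWCharSet I Cs)
    (hI : I ≠ ⊤) {𝔭 : Ideal (MvPolynomial (Fin n) K)} [𝔭.IsPrime] (hCs : ∀ c ∈ Cs, c ∈ 𝔭)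
    (hini : (Cs.map ini).prod ∉ 𝔭) : I ≤ 𝔭 := by
  obtain ⟨G, hGB, hchain, hCG, -, -⟩ := id hW
  intro f hf
  by_contra hf𝔭
  obtain ⟨g, hgI, hg𝔭, hred⟩ := exists_forall_rReduced_of_prime (I := I)
    (List.isChain_iff_pairwise.mp hchain) (fun c hc => hGB.cls_pos hI (hCG c hc))
    (fun c hc => (hGB.1 c (hCG c hc)).1) hCs
    (fun c hc h => hini (𝔭.mem_of_dvd (List.dvd_prod (List.mem_map_of_mem hc)) h)) hf hf𝔭
  obtain ⟨c, hc, hnred⟩ := hW.exists_not_rReduced hI hgI fun h => hg𝔭 (h ▸ 𝔭.zero_mem)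
  exact hnred (hred c hc)

end WCharSet

theorem statement8_general {n : ℕ} {k : Type*} [Field k]
    (Kc : Type*) [Field Kc] [Algebra k Kc]
    (P : Finset (MvPolynomial (Fin n) k))
    (hproper : Ideal.span (P : Set (MvPolynomial (Fin n) k)) ≠ ⊤)
    (Cs : List (MvPolynomial (Fin n) k))
    (hW : IsWCharSet (Ideal.span (P : Set (MvPolynomial (Fin n) k))) Cs) :
    zeroSet Kc {c | c ∈ Cs} \ zeroSet Kc {(Cs.map ini).prod}
        ⊆ zeroSet Kc (P : Set (MvPolynomial (Fin n) k)) ∧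
      zeroSet Kc (P : Set (MvPolynomial (Fin n) k)) ⊆ zeroSet Kc {c | c ∈ Cs} := by
  refine ⟨fun a ⟨hCs, hini⟩ f hf => ?_, fun a ha c hc => ?_⟩
  · have := RingHom.ker_isPrime (aeval a : MvPolynomial (Fin n) k →ₐ[k] Kc)
    have hle := hW.le_of_isPrime hproper (𝔭 := RingHom.ker (aeval a)) hCs
      (by simpa [zeroSet] using hini)
    exact hle (Ideal.subset_span hf)
  · obtain ⟨G, hGB, -, hCG, -⟩ := hW
    have hle : Ideal.span (P : Set _) ≤ RingHom.ker (aeval a) :=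
      Ideal.span_le.mpr fun f hf => ha f hf
    exact hle (hGB.1 c (hCG c hc)).1

/-- Proposition charpro (c). Let `C = [C_1, …, C_r]` be the
W-characteristic set of `⟨P⟩` with `I_i = ini(C_i)`. Then
`Zero(C) \ Zero({I_1⋯I_r}) ⊆ Zero(P) ⊆ Zero(C)`, the zeros being taken in `Kc^n` for an
algebraically closed extension `Kc` of the base field. -/
theorem statement8 {n : ℕ} {k : Type*} [Field k]
    (Kc : Type*) [Field Kc] [IsAlgClosed Kc] [Algebra k Kc]
    (P : Finset (MvPolynomial (Fin n) k)) (hne : P.Nonempty) (h0 : ∀ p ∈ P, p ≠ 0)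
    (hproper : Ideal.span (P : Set (MvPolynomial (Fin n) k)) ≠ ⊤)
    (Cs : List (MvPolynomial (Fin n) k))
    (hW : IsWCharSet (Ideal.span (P : Set (MvPolynomial (Fin n) k))) Cs) :
    zeroSet Kc {c | c ∈ Cs} \ zeroSet Kc {(Cs.map ini).prod}
        ⊆ zeroSet Kc (P : Set (MvPolynomial (Fin n) k)) ∧
      zeroSet Kc (P : Set (MvPolynomial (Fin n) k)) ⊆ zeroSet Kc {c | c ∈ Cs} :=
  statement8_general Kc P hproper Cs hW

end CharSets
end

section
/- Let C be the W-characteristic set of ⟨P⟩. Then for every i with 0 ≤ i ≤ n, the ordered set C^{⟨0,…,i⟩} is the W-characteristic set of the (n−i)th elimination ideal ⟨P⟩ ∩ k[x_1,…,x_i] of ⟨P⟩. -/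
/-!
The plex order of the paper is the colexicographic order `Finsupp.Colex` on exponent vectors,
and `k[x_1, …, x_i]` sits inside `k[x_1, …, x_n]` as the renaming along `Fin.castLE`, a strictly
monotone map onto an initial segment of the variables. Renaming therefore commutes with taking
plex leading monomials, and plex has the elimination property: if the leading monomial of `g`
involves only `x_1, …, x_i`, then so does all of `g`. Hence the elements of the reduced Gröbner
basis `G` of `⟨P⟩` that lie in `k[x_1, …, x_i]` form the reduced Gröbner basis of the
elimination ideal (they generate it by the division algorithm). Since the W-characteristic set
is read off from `G` class by class, and classes are preserved by the renaming, its elements of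
class at most `i` form the W-characteristic set of the elimination ideal.
-/

open MvPolynomial

open Finsupp
open scoped MonomialOrder

namespace Finsupp

variable {σ τ : Type*} [LinearOrder σ] [LinearOrder τ]

theorem Colex.mapDomain_strictMono {f : σ → τ} (hf : StrictMono f) :
    StrictMono fun a : Colex (σ →₀ ℕ) => toColex (mapDomain f (ofColex a)) := by
  intro a b hab
  obtain ⟨k, hagree, hk⟩ := Colex.lt_iff.1 hab
  refine Colex.lt_iff.2 ⟨f k, fun y hy => ?_, ?_⟩
  · by_cases hyr : y ∈ Set.range f
    · obtain ⟨j, rfl⟩ := hyr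
      simp only [ofColex_toColex, mapDomain_apply hf.injective]
      exact hagree j (hf.lt_iff_lt.1 hy)
    · simp only [ofColex_toColex, mapDomain_of_notMem_range _ _ hyr]
  · simpa only [ofColex_toColex, mapDomain_apply hf.injective] using hk

theorem support_subset_of_toColex_le {t : Set σ} (ht : IsLowerSet t) {a b : σ →₀ ℕ}
    (hb : ↑b.support ⊆ t) (hab : toColex a ≤ toColex b) : ↑a.support ⊆ t := by
  rcases hab.eq_or_lt with h | h
  · rw [toColex_inj.1 h]; exact hb
  obtain ⟨k, hagree, hk⟩ := Colex.lt_iff.1 h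
  have hkt : k ∈ t := hb (mem_support_iff.2 ((Nat.zero_le _).trans_lt hk).ne')
  intro j hj
  by_contra hjt
  have hbj : b j = 0 := notMem_support_iff.1 fun h => hjt (hb h)
  exact mem_support_iff.1 hj ((hagree j (lt_of_not_ge fun hjk => hjt (ht hjk hkt))).trans hbj)

end Finsupp

namespace MonomialOrder

variable {σ τ : Type*}

noncomputable def colex [LinearOrder σ] [WellFoundedLT σ] : MonomialOrder σ where
  syn := Colex (σ →₀ ℕ)
  toSyn := { toEquiv := toColex, map_add' := fun _ _ => rfl }
  toSyn_monotone := Finsupp.toColex_monotone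

section Colex

variable {R : Type*} [CommSemiring R] [LinearOrder σ] [WellFoundedLT σ] [LinearOrder τ]
  [WellFoundedLT τ]

theorem colex_lt_iff {c d : σ →₀ ℕ} : c ≺[colex] d ↔ toColex c < toColex d := Iff.rfl

theorem colex_degree_rename {f : σ → τ} (hf : StrictMono f) (p : MvPolynomial σ R) :
    colex.degree (rename f p) = mapDomain f (colex.degree p) := by
  rcases eq_or_ne p 0 with rfl | hp
  · simp
  have hmono := Colex.mapDomain_strictMono hf
  have hsupp := support_rename_of_injective (R := R) (p := p) hf.injective
  refine toColex_inj.1 (le_antisymm ?_ (colex.le_degree ?_))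
  · have hp' : rename f p ≠ 0 := (map_ne_zero_iff _ (rename_injective f hf.injective)).2 hp
    obtain ⟨d, hd, hdeq⟩ := Finset.mem_image.1 (hsupp ▸ colex.degree_mem_support hp')
    rw [← hdeq]
    exact hmono.monotone (colex.le_degree hd)
  · exact hsupp ▸ Finset.mem_image_of_mem _ (colex.degree_mem_support hp)

theorem vars_subset_of_colex_degree {t : Set σ} (ht : IsLowerSet t) {p : MvPolynomial σ R}
    (h : ↑(colex.degree p).support ⊆ t) : ↑p.vars ⊆ t := by
  intro j hj
  obtain ⟨d, hd, hjd⟩ := (mem_vars_iff_mem_support j).1 hj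
  exact support_subset_of_toColex_le ht h (colex.le_degree hd) hjd

end Colex

theorem span_eq_of_forall_degree_le {R : Type*} [CommRing R] (m : MonomialOrder σ)
    {J : Ideal (MvPolynomial σ R)} {S : Set (MvPolynomial σ R)} (hSJ : S ⊆ J)
    (hS : ∀ b ∈ S, IsUnit (m.leadingCoeff b))
    (hJ : ∀ f ∈ J, f ≠ 0 → ∃ b ∈ S, m.degree b ≤ m.degree f) :
    Ideal.span S = J := by
  refine le_antisymm (Ideal.span_le.2 hSJ) fun f hf => ?_
  obtain ⟨g, r, hfr, -, hr⟩ := m.div_set hS f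
  have hcomb :
      Finsupp.linearCombination _ (fun b : S => (b : MvPolynomial σ R)) g ∈ Ideal.span S :=
    (Finsupp.mem_span_iff_linearCombination _ _ _).2 ⟨g, rfl⟩
  suffices r = 0 by rw [hfr, this, add_zero]; exact hcomb
  by_contra hr0
  have hrJ : r ∈ J := by
    rw [eq_sub_of_add_eq' hfr.symm]
    exact J.sub_mem hf (Ideal.span_le.2 hSJ hcomb)
  obtain ⟨b, hb, hle⟩ := hJ r hrJ hr0
  exact hr _ (m.degree_mem_support hr0) b hb hle

end MonomialOrder

namespace CharSets

open MonomialOrder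

variable {m n : ℕ} {K : Type*} [Field K]

theorem plexLT_iff_colex_lt {a b : Fin n →₀ ℕ} : plexLT a b ↔ a ≺[colex] b := by
  simp only [plexLT, colex_lt_iff, Colex.lt_iff, ofColex_toColex, and_comm]

theorem isLpp_iff {p : MvPolynomial (Fin n) K} {d : Fin n →₀ ℕ} :
    IsLpp p d ↔ p ≠ 0 ∧ colex.degree p = d := by
  constructor
  · rintro ⟨hd, hmax⟩
    have hp : p ≠ 0 := by rintro rfl; simp at hd
    refine ⟨hp, by_contra fun hne => ?_⟩
    exact (plexLT_iff_colex_lt.1 (hmax _ (colex.degree_mem_support hp) hne)).not_ge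
      (colex.le_degree hd)
  · rintro ⟨hp, rfl⟩
    exact ⟨colex.degree_mem_support hp, fun d hd hne =>
      plexLT_iff_colex_lt.2 ((colex.le_degree hd).lt_of_ne (colex.toSyn.injective.ne hne))⟩

variable {f : Fin m → Fin n}

theorem isLpp_rename_iff (hf : StrictMono f) {p : MvPolynomial (Fin m) K} {d : Fin n →₀ ℕ} :
    IsLpp (rename f p) d ↔ ∃ d₀, IsLpp p d₀ ∧ mapDomain f d₀ = d := by
  simp only [isLpp_iff, colex_degree_rename hf, ne_eq,
    map_eq_zero_iff _ (rename_injective _ hf.injective)]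
  grind

theorem plexLT_mapDomain_iff (hf : StrictMono f) {a b : Fin m →₀ ℕ} :
    plexLT (mapDomain f a) (mapDomain f b) ↔ plexLT a b := by
  simp only [plexLT_iff_colex_lt, colex_lt_iff]
  exact (Colex.mapDomain_strictMono hf).lt_iff_lt

theorem exists_rename_of_isLpp_le_mapDomain (hf : Function.Injective f)
    (hrange : IsLowerSet (Set.range f)) {g : MvPolynomial (Fin n) K} {d : Fin n →₀ ℕ}
    (hg : IsLpp g d) {d₀ : Fin m →₀ ℕ} (hle : d ≤ mapDomain f d₀) :
    ∃ q, rename f q = g := by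
  refine exists_rename_eq_of_vars_subset_range g f hf (vars_subset_of_colex_degree hrange ?_)
  rw [(isLpp_iff.1 hg).2]
  intro j hj
  obtain ⟨j₀, -, rfl⟩ := Finset.mem_image.1 (mapDomain_support (support_mono hle hj))
  exact Set.mem_range_self j₀

theorem span_eq_of_isLpp_le {J : Ideal (MvPolynomial (Fin n) K)}
    {S : Finset (MvPolynomial (Fin n) K)}
    (hS : ∀ g ∈ S, g ∈ J ∧ g ≠ 0 ∧ ∀ d, IsLpp g d → g.coeff d = 1)
    (hJ : ∀ F ∈ J, F ≠ 0 → ∃ g ∈ S, ∃ dg dF,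
      IsLpp g dg ∧ IsLpp F dF ∧ dg ≤ dF) :
    Ideal.span (S : Set (MvPolynomial (Fin n) K)) = J := by
  refine colex.span_eq_of_forall_degree_le (fun g hg => (hS g hg).1) (fun g hg => ?_) ?_
  · obtain ⟨-, hg0, hg1⟩ := hS g hg
    rw [leadingCoeff, hg1 _ (isLpp_iff.2 ⟨hg0, rfl⟩)]
    exact isUnit_one
  · intro F hF hF0
    obtain ⟨g, hg, dg, dF, hdg, hdF, hle⟩ := hJ F hF hF0
    exact ⟨g, hg, (isLpp_iff.1 hdg).2 ▸ (isLpp_iff.1 hdF).2 ▸ hle⟩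

theorem IsReducedGB.comap_rename (hf : StrictMono f) (hrange : IsLowerSet (Set.range f))
    {I : Ideal (MvPolynomial (Fin n) K)} {G : Finset (MvPolynomial (Fin n) K)}
    (hG : IsReducedGB I G) :
    IsReducedGB (I.comap (rename (R := K) f).toRingHom)
      (G.preimage (rename f) (rename_injective f hf.injective).injOn) := by
  obtain ⟨hmonic, hlead, hreduced, -⟩ := hG
  have hinj := rename_injective (R := K) f hf.injective
  set J := I.comap (rename (R := K) f).toRingHom
  set G' := G.preimage (rename f) hinj.injOn
  have hmonic' : ∀ q ∈ G', q ∈ J ∧ q ≠ 0 ∧ ∀ d, IsLpp q d → q.coeff d = 1 := by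
    intro q hq
    obtain ⟨hqI, hq0, hq1⟩ := hmonic _ (Finset.mem_preimage.1 hq)
    refine ⟨hqI, fun h => hq0 (by rw [h, map_zero]), fun d hd => ?_⟩
    rw [← coeff_rename_mapDomain f hf.injective]
    exact hq1 _ ((isLpp_rename_iff hf).2 ⟨d, hd, rfl⟩)
  have hlead' :
      ∀ F ∈ J, F ≠ 0 → ∃ q ∈ G', ∃ dq dF, IsLpp q dq ∧ IsLpp F dF ∧ dq ≤ dF := by
    intro F hF hF0
    obtain ⟨g, hg, dg, dF, hdg, hdF, hle⟩ := hlead _ hF ((map_ne_zero_iff _ hinj).2 hF0)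
    obtain ⟨dF₀, hdF₀, rfl⟩ := (isLpp_rename_iff hf).1 hdF
    obtain ⟨q, rfl⟩ := exists_rename_of_isLpp_le_mapDomain hf.injective hrange hdg hle
    obtain ⟨dq, hdq, rfl⟩ := (isLpp_rename_iff hf).1 hdg
    exact ⟨q, Finset.mem_preimage.2 hg, dq, dF₀, hdq, hdF₀,
      fun j => by simpa only [mapDomain_apply hf.injective] using hle (f j)⟩
  refine ⟨hmonic', hlead', ?_, span_eq_of_isLpp_le hmonic' hlead'⟩
  intro q hq q' hq' hne d hd d' hd' hle
  refine hreduced _ (Finset.mem_preimage.1 hq) _ (Finset.mem_preimage.1 hq') (hinj.ne hne) _ ?_ _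
    ((isLpp_rename_iff hf).2 ⟨d', hd', rfl⟩) (mapDomain_mono hle)
  rw [support_rename_of_injective hf.injective]
  exact Finset.mem_image_of_mem _ hd

theorem cls_rename_castLE {i : ℕ} (hi : i ≤ n) (p : MvPolynomial (Fin i) K) :
    cls (rename (Fin.castLE hi) p) = cls p := by
  simp only [cls, vars_def, degrees_rename_of_injective (Fin.castLE_injective hi),
    Multiset.toFinset_map, Finset.sup_image]
  rfl

theorem cls_le (p : MvPolynomial (Fin m) K) : cls p ≤ m :=
  Finset.sup_le fun j _ => j.isLt

theorem isLowerSet_range_castLE {i : ℕ} (hi : i ≤ n) :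
    IsLowerSet (Set.range (Fin.castLE hi)) := by
  rw [Fin.range_castLE]
  exact fun a b hba ha => show (b : ℕ) < i from Nat.lt_of_le_of_lt hba ha

theorem mem_iff_rename_mem_of_map_eq_filter {i : ℕ} (hi : i ≤ n)
    {Cs : List (MvPolynomial (Fin n) K)} {D : List (MvPolynomial (Fin i) K)}
    (hD : D.map (rename (Fin.castLE hi)) = Cs.filter (fun c => cls c ≤ i))
    {d : MvPolynomial (Fin i) K} : d ∈ D ↔ rename (Fin.castLE hi) d ∈ Cs := by
  rw [← List.mem_map_of_injective (rename_injective _ (Fin.castLE_injective hi)), hD,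
    List.mem_filter, cls_rename_castLE]
  simp [cls_le]

theorem isChain_cls_of_map_eq_filter {i : ℕ} (hi : i ≤ n)
    {Cs : List (MvPolynomial (Fin n) K)} {D : List (MvPolynomial (Fin i) K)}
    (hD : D.map (rename (Fin.castLE hi)) = Cs.filter (fun c => cls c ≤ i))
    (hCs : Cs.IsChain fun A B => cls A < cls B) : D.IsChain fun A B => cls A < cls B := by
  have h := ((List.isChain_map cls).2 hCs).sublist
    ((List.filter_sublist (p := fun c => cls c ≤ i)).map cls)
  rw [← hD, List.map_map, List.isChain_map] at h
  simpa only [Function.comp_apply, cls_rename_castLE] using h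

theorem statement9_general {n : ℕ} {K : Type*} [Field K]
    (P : Finset (MvPolynomial (Fin n) K))
    (Cs : List (MvPolynomial (Fin n) K))
    (hW : IsWCharSet (Ideal.span (P : Set (MvPolynomial (Fin n) K))) Cs) :
    ∀ i : ℕ, ∀ hi : i ≤ n, ∀ D : List (MvPolynomial (Fin i) K),
      D.map (MvPolynomial.rename (Fin.castLE hi)) = Cs.filter (fun c => cls c ≤ i) →
      IsWCharSet
        (Ideal.comap (MvPolynomial.rename (Fin.castLE hi)).toRingHom
          (Ideal.span (P : Set (MvPolynomial (Fin n) K)))) D := by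
  intro i hi D hD
  obtain ⟨G, hG, hchain, hCsG, hcls, hmin⟩ := hW
  have hf := Fin.strictMono_castLE hi
  have hD_mem {d} := mem_iff_rename_mem_of_map_eq_filter hi hD (d := d)
  refine ⟨_, hG.comap_rename hf (isLowerSet_range_castLE hi),
    isChain_cls_of_map_eq_filter hi hD hchain,
    fun d hd => Finset.mem_preimage.2 (hCsG _ (hD_mem.1 hd)), fun q hq => ?_, ?_⟩
  · obtain ⟨c, hc, hcq⟩ := hcls _ (Finset.mem_preimage.1 hq)
    have hcD : c ∈ D.map (rename (Fin.castLE hi)) :=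
      hD ▸ List.mem_filter.2 ⟨hc, by simpa [hcq, cls_rename_castLE] using cls_le q⟩
    obtain ⟨d, hd, rfl⟩ := List.mem_map.1 hcD
    exact ⟨d, hd, by simpa only [cls_rename_castLE] using hcq⟩
  · intro d hd q hq hcls_eq hne
    obtain ⟨dc, dq, hdc, hdq, hlt⟩ := hmin _ (hD_mem.1 hd) _ (Finset.mem_preimage.1 hq)
      (by simpa only [cls_rename_castLE] using hcls_eq) ((rename_injective _ hf.injective).ne hne)
    obtain ⟨dc₀, hdc₀, rfl⟩ := (isLpp_rename_iff hf).1 hdc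
    obtain ⟨dq₀, hdq₀, rfl⟩ := (isLpp_rename_iff hf).1 hdq
    exact ⟨dc₀, dq₀, hdc₀, hdq₀, (plexLT_mapDomain_iff hf).1 hlt⟩

/-- Proposition elimpro. Let `C` be the W-characteristic set of `⟨P⟩`.
For every `0 ≤ i ≤ n`, the ordered set `C^{⟨0,…,i⟩}` (the elements of `C` lying in
`k[x_1, …, x_i]`) is the W-characteristic set of the `(n−i)`-th elimination ideal
`⟨P⟩ ∩ k[x_1, …, x_i]`. -/
theorem statement9 {n : ℕ} {K : Type*} [Field K]
    (P : Finset (MvPolynomial (Fin n) K)) (hne : P.Nonempty) (h0 : ∀ p ∈ P, p ≠ 0)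
    (hproper : Ideal.span (P : Set (MvPolynomial (Fin n) K)) ≠ ⊤)
    (Cs : List (MvPolynomial (Fin n) K))
    (hW : IsWCharSet (Ideal.span (P : Set (MvPolynomial (Fin n) K))) Cs) :
    ∀ i : ℕ, ∀ hi : i ≤ n, ∀ D : List (MvPolynomial (Fin i) K),
      D.map (MvPolynomial.rename (Fin.castLE hi)) = Cs.filter (fun c => cls c ≤ i) →
      IsWCharSet
        (Ideal.comap (MvPolynomial.rename (Fin.castLE hi)).toRingHom
          (Ideal.span (P : Set (MvPolynomial (Fin n) K)))) D :=
  statement9_general P Cs hW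

end CharSets
end
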